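/- Let α = 0 0 1² 0 0 1⁴ 0 0 1⁶ ⋯ (blocks 0 0 1^{2n} for n = 1, 2, …) and β = 0 1 0 1² 0 1³ ⋯ (blocks 0 1^n). Then there is no quasi-isometry from α to β that is eventually injective, i.e., no quasi-isometry f such that f is injective on [N, ∞) for some N. -/

import Mathlib

def IsQI {Γ : Type*} (α β : ℕ → Γ) (f : ℕ → ℕ) (A B : ℝ) : Prop :=
  1 ≤ A ∧ 0 ≤ B ∧ (∀ n, α n = β (f n)) ∧
  (∀ x y : ℕ, (1 / A) * |(x : ℝ) - (y : ℝ)| - B ≤ |(f x : ℝ) - (f y : ℝ)| ∧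
      |(f x : ℝ) - (f y : ℝ)| ≤ A * |(x : ℝ) - (y : ℝ)| + B) ∧
  (∀ m : ℕ, ∃ x : ℕ, |(m : ℝ) - (f x : ℝ)| ≤ A)

/-- `α ≤_QI β`: there is a quasi-isometry from `α` to `β`. -/
def QI {Γ : Type*} (α β : ℕ → Γ) : Prop := ∃ f A B, IsQI α β f A B

open scoped Classical

/-- Total length of the first `k` blocks `0 0 1^{2n}` (for `n = 1, …, k`). -/
def aSum (k : ℕ) : ℕ := (Finset.range k).sum (fun i => 2 * (i + 1) + 2)

/-- Total length of the first `k` blocks `0 1^n` (for `n = 1, …, k`). -/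
def bSum (k : ℕ) : ℕ := (Finset.range k).sum (fun i => (i + 1) + 1)

/-- `α = 0 0 1² 0 0 1⁴ 0 0 1⁶ ⋯`: position `i` is `0` iff it is one of the first two
positions of its block. -/
noncomputable def alphaStr : ℕ → Fin 2 := fun i =>
  if ∃ k ≤ i, aSum k ≤ i ∧ i < aSum k + 2 then 0 else 1

/-- `β = 0 1 0 1² 0 1³ ⋯`: position `i` is `0` iff it is the first position of
its block. -/
noncomputable def betaStr : ℕ → Fin 2 := fun i =>
  if ∃ k ≤ i, bSum k = i then 0 else 1

/-!
Consecutive positions `aSum k`, `aSum k + 1` both carry `0` in `α`, so a quasi-isometry `f`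
sends them to zeros of `β` at distance at most `A + B`. But `f` tends to infinity, and far out
the zeros of `β` are further apart than `A + B`, so `f` must identify the two positions.
-/

open Filter

lemma aSum_strictMono : StrictMono aSum :=
  strictMono_nat_of_lt_succ fun k => by simp only [aSum, Finset.sum_range_succ]; omega

lemma bSum_succ (k : ℕ) : bSum (k + 1) = bSum k + (k + 2) := by
  simp [bSum, Finset.sum_range_succ]

lemma bSum_strictMono : StrictMono bSum :=
  strictMono_nat_of_lt_succ fun k => by rw [bSum_succ]; omega

lemma alphaStr_eq_zero {k j : ℕ} (h₁ : aSum k ≤ j) (h₂ : j < aSum k + 2) :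
    alphaStr j = 0 :=
  if_pos ⟨k, (aSum_strictMono.id_le k).trans h₁, h₁, h₂⟩

lemma exists_bSum_eq_of_betaStr_eq_zero {j : ℕ} (h : betaStr j = 0) : ∃ k, bSum k = j := by
  unfold betaStr at h
  split_ifs at h with hj
  · obtain ⟨k, -, hk⟩ := hj
    exact ⟨k, hk⟩
  · exact absurd h (by decide)

lemma add_le_of_betaStr_eq_zero {t i j : ℕ} (hi : betaStr i = 0) (hj : betaStr j = 0)
    (hij : i < j) (hti : bSum t ≤ i) : i + (t + 2) ≤ j := by
  obtain ⟨k, rfl⟩ := exists_bSum_eq_of_betaStr_eq_zero hi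
  obtain ⟨m, rfl⟩ := exists_bSum_eq_of_betaStr_eq_zero hj
  have htk : t ≤ k := bSum_strictMono.le_iff_le.1 hti
  have hkm : k + 1 ≤ m := bSum_strictMono.lt_iff_lt.1 hij
  have := bSum_strictMono.monotone hkm
  rw [bSum_succ] at this
  omega

lemma le_abs_sub_of_betaStr_eq_zero {t i j : ℕ} (hi : betaStr i = 0) (hj : betaStr j = 0)
    (hij : i ≠ j) (hti : bSum t ≤ i) (htj : bSum t ≤ j) : (t : ℝ) + 2 ≤ |(i : ℝ) - j| := by
  wlog h : i < j generalizing i j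
  · rw [abs_sub_comm]
    exact this hj hi hij.symm htj hti (by omega)
  have : (i : ℝ) + (t + 2) ≤ j := by exact_mod_cast add_le_of_betaStr_eq_zero hi hj h hti
  rw [abs_sub_comm, abs_of_nonneg (by linarith)]
  linarith

namespace IsQI

variable {Γ : Type*} {α β : ℕ → Γ} {f : ℕ → ℕ} {A B : ℝ}

lemma abs_sub_succ_le (hf : IsQI α β f A B) (x : ℕ) :
    |(f x : ℝ) - f (x + 1)| ≤ A + B := by
  have h := (hf.2.2.2.1 x (x + 1)).2
  rwa [Nat.cast_succ, sub_add_cancel_left, abs_neg, abs_one, mul_one] at h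

lemma tendsto_atTop (hf : IsQI α β f A B) : Tendsto f atTop atTop := by
  obtain ⟨hA, -, -, hqi, -⟩ := hf
  rw [← tendsto_natCast_atTop_iff (R := ℝ), tendsto_atTop_atTop]
  refine fun b => ⟨⌈A * (b + B + f 0)⌉₊, fun x hx => ?_⟩
  have hAx : A * (b + B + f 0) ≤ x := (Nat.le_ceil _).trans (by exact_mod_cast hx)
  have hlow := (hqi x 0).1
  rw [Nat.cast_zero, sub_zero, abs_of_nonneg (Nat.cast_nonneg x)] at hlow
  have hdiv : b + B + f 0 ≤ 1 / A * x := by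
    rw [one_div_mul_eq_div, le_div_iff₀ (by linarith)]
    linarith
  have : |(f x : ℝ) - f 0| ≤ f x + f 0 :=
    (abs_sub _ _).trans_eq (by simp only [Nat.abs_cast])
  linarith

end IsQI

/-- No quasi-isometry from `α` to `β` is eventually injective. -/
theorem no_eventually_injective_QI :
    ¬ ∃ (f : ℕ → ℕ) (A B : ℝ) (N : ℕ), IsQI alphaStr betaStr f A B ∧
        ∀ x y : ℕ, N ≤ x → N ≤ y → f x = f y → x = y := by
  rintro ⟨f, A, B, N, hf, hinj⟩
  set t := ⌈A + B⌉₊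
  obtain ⟨X, hX⟩ := tendsto_atTop_atTop.1 hf.tendsto_atTop (bSum t)
  set p := aSum (max N X)
  have hp : max N X ≤ p := aSum_strictMono.id_le _
  have hzero : ∀ x, p ≤ x → x < p + 2 → betaStr (f x) = 0 := fun x h₁ h₂ =>
    (hf.2.2.1 x).symm.trans (alphaStr_eq_zero h₁ h₂)
  have hne : f p ≠ f (p + 1) := fun h => by
    have := hinj p (p + 1) (by omega) (by omega) h
    omega
  have hfar := le_abs_sub_of_betaStr_eq_zero (hzero p le_rfl (by omega))
    (hzero (p + 1) (by omega) (by omega)) hne (hX p (by omega)) (hX (p + 1) (by omega))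
  linarith [hf.abs_sub_succ_le p, Nat.le_ceil (A + B)]
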